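/- arXiv:1304.0157 — 3 statements merged into one kernel-verified Lean document; each statement's English description precedes it below -/
import Mathlib

section
/- Let f : [0, ∞) → ℝ be a continuous convex function, let M > 0 be a scalar, and let B_1,…,B_n be positive operators in B(H) with Σ_{i=1}^n B_i = M·I. Then Σ_i f(B_i) ≤ f(Σ_i B_i) + (n−1)·f(0)·I − δ_f · B̃ ≤ f(Σ_i B_i) + (n−1)·f(0)·I, where δ_f = f(0) + f(M) − 2 f(M/2) and B̃ = (n/2)·I − Σ_i |(1/M)·B_i − (1/2)·I|. -/
/-!
For x ∈ [0, M] put t = x / M. On [0, M/2] and on [M/2, M] a convex f lies below its chords,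
and these two chords together are the chord of f over [0, M] minus δ_f · min(t, 1 - t), where
min(t, 1 - t) = 1/2 - |t - 1/2|. Since 0 ≤ B_i ≤ ∑ B_j = M, the spectrum of each B_i lies in
[0, M], so this scalar inequality transfers to B_i by monotonicity of the functional calculus.
Summing over i, the chord terms add up to (f(M) - f(0)) · I = f(∑ B_i) - f(0) · I because
∑ B_i is the scalar M. The second inequality holds because δ_f ≥ 0 (midpoint convexity) and
|B_i / M - 1/2| ≤ 1/2.
-/

noncomputable def opAbs {H : Type*} [NormedAddCommGroup H] [InnerProductSpace ℂ H]
    [CompleteSpace H] (A : H →L[ℂ] H) : H →L[ℂ] H :=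
  cfc (fun t : ℝ => |t|) A

open Set

lemma ConvexOn.le_chord_sub_tent {f : ℝ → ℝ} {M x : ℝ} (hconv : ConvexOn ℝ (Icc 0 M) f)
    (hM : 0 < M) (hx : x ∈ Icc 0 M) :
    f x ≤ (f M - f 0) / M * x + f 0 -
      (f 0 + f M - 2 * f (M / 2)) * (1 / 2 - |M⁻¹ * x - 1 / 2|) := by
  obtain ⟨t, rfl⟩ : ∃ t, x = M * t := ⟨M⁻¹ * x, by field_simp⟩
  have ht0 : 0 ≤ t := nonneg_of_mul_nonneg_right hx.1 hM
  have ht1 : t ≤ 1 := le_of_mul_le_mul_left (by simpa using hx.2) hM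
  have h0 : (0 : ℝ) ∈ Icc 0 M := left_mem_Icc.2 hM.le
  have hmid : M / 2 ∈ Icc 0 M := ⟨by positivity, by linarith⟩
  have hM' : M ∈ Icc 0 M := right_mem_Icc.2 hM.le
  rw [inv_mul_cancel_left₀ hM.ne', div_mul_eq_mul_div, mul_div_assoc, mul_div_cancel_left₀ t hM.ne']
  rcases le_total t (1 / 2) with h | h
  · have hcv := hconv.2 h0 hmid (by linarith) (by linarith) (by ring : 1 - 2 * t + 2 * t = 1)
    simp only [smul_eq_mul, mul_zero, zero_add] at hcv
    rw [show 2 * t * (M / 2) = M * t by ring] at hcv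
    rw [abs_of_nonpos (by linarith)]
    linear_combination hcv
  · have hcv := hconv.2 hmid hM' (by linarith) (by linarith) (by ring : 2 - 2 * t + (2 * t - 1) = 1)
    simp only [smul_eq_mul] at hcv
    rw [show (2 - 2 * t) * (M / 2) + (2 * t - 1) * M = M * t by ring] at hcv
    rw [abs_of_nonneg (by linarith)]
    linear_combination hcv

lemma ConvexOn.midpoint_defect_nonneg {f : ℝ → ℝ} {M : ℝ} (hconv : ConvexOn ℝ (Icc 0 M) f)
    (hM : 0 ≤ M) : 0 ≤ f 0 + f M - 2 * f (M / 2) := by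
  have hcv := hconv.2 (left_mem_Icc.2 hM) (right_mem_Icc.2 hM) (by norm_num) (by norm_num)
    (add_halves 1)
  simp only [smul_eq_mul, mul_zero, zero_add] at hcv
  rw [one_div_mul_eq_div] at hcv
  linarith

lemma abs_inv_mul_sub_half_le {M x : ℝ} (hM : 0 < M) (hx : x ∈ Icc 0 M) :
    |M⁻¹ * x - 1 / 2| ≤ 1 / 2 := by
  have h₀ : 0 ≤ M⁻¹ * x := mul_nonneg (inv_nonneg.2 hM.le) hx.1
  have h₁ : M⁻¹ * x ≤ 1 := (inv_mul_le_one₀ hM).2 hx.2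
  rw [abs_le]
  constructor <;> linarith

section CStarAlgebra

variable {A : Type*} [CStarAlgebra A]

lemma cfc_affine_sub_tent {a : A} (ha : IsSelfAdjoint a) (c d δ M : ℝ) :
    cfc (fun x => c * x + d - δ * (1 / 2 - |M⁻¹ * x - 1 / 2|)) a =
      c • a + d • 1 - δ • ((1 / 2 : ℝ) • 1 - cfc (fun x => |M⁻¹ * x - 1 / 2|) a) := by
  rw [cfc_sub _ _ a, cfc_add (a := a) (c * ·) (fun _ => d), cfc_const_mul_id c a, cfc_const d a,
    cfc_const_mul δ _ a, cfc_sub (fun _ => 1 / 2) _ a, cfc_const _ a,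
    Algebra.algebraMap_eq_smul_one, Algebra.algebraMap_eq_smul_one]

variable [PartialOrder A] [StarOrderedRing A]

lemma spectrum_subset_Icc_of_sum_eq_smul_one {ι : Type*} [Fintype ι] {B : ι → A} {M : ℝ}
    (hB : ∀ i, 0 ≤ B i) (hsum : ∑ i, B i = M • 1) (i : ι) : spectrum ℝ (B i) ⊆ Icc 0 M := by
  have hle : B i ≤ algebraMap ℝ A M := by
    rw [Algebra.algebraMap_eq_smul_one, ← hsum]
    exact Finset.single_le_sum (fun j _ => hB j) (Finset.mem_univ i)
  exact fun x hx => ⟨spectrum_nonneg_of_nonneg (hB i) hx,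
    (le_algebraMap_iff_spectrum_le (.of_nonneg (hB i))).1 hle x hx⟩

lemma cfc_le_chord_sub_tent {f : ℝ → ℝ} {M : ℝ} (hf : ContinuousOn f (Icc 0 M))
    (hconv : ConvexOn ℝ (Icc 0 M) f) (hM : 0 < M) {a : A} (ha : IsSelfAdjoint a)
    (hspec : spectrum ℝ a ⊆ Icc 0 M) :
    cfc f a ≤ ((f M - f 0) / M) • a + f 0 • 1 -
      (f 0 + f M - 2 * f (M / 2)) • ((1 / 2 : ℝ) • 1 - cfc (fun x => |M⁻¹ * x - 1 / 2|) a) := by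
  rw [← cfc_affine_sub_tent ha]
  exact cfc_mono (fun x hx => hconv.le_chord_sub_tent hM (hspec hx)) (hf.mono hspec)

lemma cfc_tent_le {M : ℝ} (hM : 0 < M) {a : A} (ha : IsSelfAdjoint a)
    (hspec : spectrum ℝ a ⊆ Icc 0 M) :
    cfc (fun x => |M⁻¹ * x - 1 / 2|) a ≤ (1 / 2 : ℝ) • 1 := by
  rw [← Algebra.algebraMap_eq_smul_one, cfc_le_algebraMap_iff _ _ a]
  exact fun x hx => abs_inv_mul_sub_half_le hM (hspec hx)

variable {ι : Type*} [Fintype ι] {B : ι → A} {M : ℝ}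

lemma sum_cfc_tent_le (hM : 0 < M) (hB : ∀ i, 0 ≤ B i) (hsum : ∑ i, B i = M • 1) :
    ∑ i, cfc (fun x => |M⁻¹ * x - 1 / 2|) (B i) ≤ ((Fintype.card ι : ℝ) / 2) • 1 := by
  calc ∑ i, cfc (fun x => |M⁻¹ * x - 1 / 2|) (B i)
      ≤ ∑ _i : ι, (1 / 2 : ℝ) • (1 : A) := Finset.sum_le_sum fun i _ =>
        cfc_tent_le hM (.of_nonneg (hB i)) (spectrum_subset_Icc_of_sum_eq_smul_one hB hsum i)
    _ = ((Fintype.card ι : ℝ) / 2) • 1 := by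
        rw [Finset.sum_const, Finset.card_univ, ← Nat.cast_smul_eq_nsmul ℝ, smul_smul,
          mul_one_div]

lemma sum_cfc_le_of_sum_eq_smul_one {f : ℝ → ℝ} (hf : ContinuousOn f (Icc 0 M))
    (hconv : ConvexOn ℝ (Icc 0 M) f) (hM : 0 < M) (hB : ∀ i, 0 ≤ B i)
    (hsum : ∑ i, B i = M • 1) :
    ∑ i, cfc f (B i) ≤ cfc f (∑ i, B i) + (((Fintype.card ι : ℝ) - 1) * f 0) • 1 -
      (f 0 + f M - 2 * f (M / 2)) •
        (((Fintype.card ι : ℝ) / 2) • 1 - ∑ i, cfc (fun x => |M⁻¹ * x - 1 / 2|) (B i)) := by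
  have hfM : cfc f (M • (1 : A)) = f M • 1 := by
    rw [← Algebra.algebraMap_eq_smul_one, cfc_algebraMap, Algebra.algebraMap_eq_smul_one]
  have hchord : ((f M - f 0) / M) • M • (1 : A) = (f M - f 0) • 1 := by
    rw [smul_smul, div_mul_cancel₀ _ hM.ne']
  calc ∑ i, cfc f (B i)
      ≤ ∑ i, (((f M - f 0) / M) • B i + f 0 • 1 - (f 0 + f M - 2 * f (M / 2)) •
          ((1 / 2 : ℝ) • 1 - cfc (fun x => |M⁻¹ * x - 1 / 2|) (B i))) :=
        Finset.sum_le_sum fun i _ => cfc_le_chord_sub_tent hf hconv hM (.of_nonneg (hB i))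
          (spectrum_subset_Icc_of_sum_eq_smul_one hB hsum i)
    _ = _ := by
        simp only [Finset.sum_sub_distrib, Finset.sum_add_distrib, ← Finset.smul_sum, hsum, hfM,
          hchord, Finset.sum_const, Finset.card_univ, ← Nat.cast_smul_eq_nsmul ℝ, smul_smul]
        match_scalars <;> ring

end CStarAlgebra

lemma opAbs_smul_sub_smul_one {H : Type*} [NormedAddCommGroup H] [InnerProductSpace ℂ H]
    [CompleteSpace H] {a : H →L[ℂ] H} (ha : IsSelfAdjoint a) (r s : ℝ) :
    opAbs (r • a - s • 1) = cfc (fun x => |r * x - s|) a := by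
  have hlin : r • a - s • 1 = cfc (fun x => r * x - s) a := by
    rw [cfc_sub (r * ·) (fun _ => s) a, cfc_const_mul_id r a, cfc_const s a,
      Algebra.algebraMap_eq_smul_one]
  rw [opAbs, hlin, ← cfc_comp' (|·|) (fun x => r * x - s) a]

/-- refined Petrović operator inequality, Corollary 3.2. -/
theorem petrovic_refined {H : Type*} [NormedAddCommGroup H] [InnerProductSpace ℂ H]
    [CompleteSpace H] {n : ℕ} (f : ℝ → ℝ) (hf : ContinuousOn f (Set.Ici 0))
    (hconv : ConvexOn ℝ (Set.Ici 0) f) (M : ℝ) (hM : 0 < M)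
    (B : Fin n → H →L[ℂ] H) (hBpos : ∀ i, 0 ≤ B i)
    (hBsum : ∑ i, B i = M • (1 : H →L[ℂ] H)) :
    ∑ i, cfc f (B i) ≤
        cfc f (∑ i, B i) + (((n : ℝ) - 1) * f 0) • (1 : H →L[ℂ] H) -
          (f 0 + f M - 2 * f (M / 2)) •
            (((n : ℝ) / 2) • (1 : H →L[ℂ] H) -
              ∑ i, opAbs (M⁻¹ • B i - (1 / 2 : ℝ) • 1)) ∧
      cfc f (∑ i, B i) + (((n : ℝ) - 1) * f 0) • (1 : H →L[ℂ] H) -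
          (f 0 + f M - 2 * f (M / 2)) •
            (((n : ℝ) / 2) • (1 : H →L[ℂ] H) -
              ∑ i, opAbs (M⁻¹ • B i - (1 / 2 : ℝ) • 1)) ≤
        cfc f (∑ i, B i) + (((n : ℝ) - 1) * f 0) • (1 : H →L[ℂ] H) := by
  have hfM : ContinuousOn f (Icc 0 M) := hf.mono Icc_subset_Ici_self
  have hconvM : ConvexOn ℝ (Icc 0 M) f := hconv.subset Icc_subset_Ici_self (convex_Icc 0 M)
  have habs : ∀ i, opAbs (M⁻¹ • B i - (1 / 2 : ℝ) • 1) = cfc (fun x => |M⁻¹ * x - 1 / 2|) (B i) :=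
    fun i => opAbs_smul_sub_smul_one (.of_nonneg (hBpos i)) _ _
  have hmain := sum_cfc_le_of_sum_eq_smul_one hfM hconvM hM hBpos hBsum
  have htent := sum_cfc_tent_le hM hBpos hBsum
  simp only [Fintype.card_fin] at hmain htent
  simp only [habs]
  exact ⟨hmain, sub_le_self _ <|
    smul_nonneg (hconvM.midpoint_defect_nonneg hM.le) (sub_nonneg.2 htent)⟩
end

section
/- Let m < M be real numbers, let J be an interval containing [m, M], and let f : J → ℝ be a continuous convex function. Let Φ_1,…,Φ_n be positive linear maps on B(H) with Σ_{i=1}^n Φ_i(I) = I, and let A_i, D_i ∈ σ(J) (i = 1,…,n) satisfy A_i ≤ m·I ≤ (A_i + D_i)/2 ≤ M·I ≤ D_i for each i. Then f(Σ_i Φ_i((A_i + D_i)/2)) ≤ Σ_i Φ_i((f(A_i) + f(D_i))/2) − δ_f · X̃ ≤ Σ_i Φ_i((f(A_i) + f(D_i))/2), where X̃ = (1/2)·I − (1/(M−m))·|Σ_i Φ_i((A_i + D_i)/2) − ((m+M)/2)·I|. -/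
open Set

section Scalar

variable {𝕜 : Type*} [Field 𝕜]

def chord (f : 𝕜 → 𝕜) (a b t : 𝕜) : 𝕜 := f a + slope f a b * (t - a)

theorem sub_mul_chord {f : 𝕜 → 𝕜} {a b : 𝕜} (hab : a ≠ b) (t : 𝕜) :
    (b - a) * chord f a b t = (b - t) * f a + (t - a) * f b := by
  rw [chord, slope_def_field]
  field_simp [sub_ne_zero.2 hab.symm]
  ring

variable [LinearOrder 𝕜] [IsStrictOrderedRing 𝕜]

def tent (a b t : 𝕜) : 𝕜 := 1 / 2 - (b - a)⁻¹ * |t - (a + b) / 2|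

variable {s : Set 𝕜} {f : 𝕜 → 𝕜} {a b x : 𝕜}

theorem tent_nonneg (hab : a < b) (hx : x ∈ Icc a b) : 0 ≤ tent a b x := by
  have hba : 0 < b - a := sub_pos.2 hab
  have : |x - (a + b) / 2| ≤ (b - a) / 2 := abs_le.2 ⟨by linarith [hx.1], by linarith [hx.2]⟩
  rw [tent, sub_nonneg, inv_mul_le_iff₀ hba]
  linarith

namespace ConvexOn

theorem sub_mul_le_of_mem_Icc (hf : ConvexOn 𝕜 s f) (ha : a ∈ s) (hb : b ∈ s) (hx : x ∈ Icc a b) :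
    (b - a) * f x ≤ (b - x) * f a + (x - a) * f b := by
  obtain ⟨hax, hxb⟩ := hx
  rcases (hax.trans hxb).eq_or_lt with rfl | hab
  · obtain rfl : x = a := le_antisymm hxb hax
    simp
  have hba : 0 < b - a := sub_pos.2 hab
  have hcvx := hf.2 ha hb (div_nonneg (sub_nonneg.2 hxb) hba.le)
    (div_nonneg (sub_nonneg.2 hax) hba.le) (by field)
  have hcomb : ((b - x) / (b - a)) • a + ((x - a) / (b - a)) • b = x := by
    simp only [smul_eq_mul]; field
  rw [hcomb, smul_eq_mul, smul_eq_mul] at hcvx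
  calc (b - a) * f x ≤ (b - a) * ((b - x) / (b - a) * f a + (x - a) / (b - a) * f b) :=
        mul_le_mul_of_nonneg_left hcvx hba.le
    _ = (b - x) * f a + (x - a) * f b := by field_simp

theorem le_sub_mul_of_le_or_le (hf : ConvexOn 𝕜 s f) (ha : a ∈ s) (hb : b ∈ s) (hx : x ∈ s)
    (hab : a ≤ b) (hout : x ≤ a ∨ b ≤ x) :
    (b - x) * f a + (x - a) * f b ≤ (b - a) * f x := by
  rcases hout with hxa | hbx
  · linarith [hf.sub_mul_le_of_mem_Icc hx hb ⟨hxa, hab⟩]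
  · linarith [hf.sub_mul_le_of_mem_Icc ha hx ⟨hab, hbx⟩]

theorem chord_le_of_le_or_le (hf : ConvexOn 𝕜 s f) (ha : a ∈ s) (hb : b ∈ s) (hx : x ∈ s)
    (hab : a < b) (hout : x ≤ a ∨ b ≤ x) : chord f a b x ≤ f x := by
  refine le_of_mul_le_mul_left ?_ (sub_pos.2 hab)
  rw [sub_mul_chord hab.ne]
  exact hf.le_sub_mul_of_le_or_le ha hb hx hab.le hout

theorem midpoint_gap_nonneg (hf : ConvexOn 𝕜 s f) (ha : a ∈ s) (hb : b ∈ s) :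
    0 ≤ f a + f b - 2 * f ((a + b) / 2) := by
  have hcvx := hf.2 ha hb (by norm_num : (0 : 𝕜) ≤ 2⁻¹) (by norm_num : (0 : 𝕜) ≤ 2⁻¹)
    (by norm_num)
  rw [smul_eq_mul, smul_eq_mul, smul_eq_mul, smul_eq_mul, ← mul_add, inv_mul_eq_div] at hcvx
  linarith

theorem sub_mul_add_midpoint_gap_le (hf : ConvexOn 𝕜 s f) (ha : a ∈ s) (hb : b ∈ s)
    (hx : x ∈ Icc a b) :
    (b - a) * f x + (f a + f b - 2 * f ((a + b) / 2)) * ((b - a) / 2 - |x - (a + b) / 2|) ≤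
      (b - x) * f a + (x - a) * f b := by
  obtain ⟨hax, hxb⟩ := hx
  have hc : (a + b) / 2 ∈ s :=
    hf.1.ordConnected.out ha hb ⟨by linarith [hax.trans hxb], by linarith [hax.trans hxb]⟩
  rcases le_total x ((a + b) / 2) with hxc | hcx
  · rw [abs_of_nonpos (sub_nonpos.2 hxc)]
    linarith [hf.sub_mul_le_of_mem_Icc ha hc ⟨hax, hxc⟩]
  · rw [abs_of_nonneg (sub_nonneg.2 hcx)]
    linarith [hf.sub_mul_le_of_mem_Icc hc hb ⟨hcx, hxb⟩]

theorem add_midpoint_gap_mul_tent_le_chord (hf : ConvexOn 𝕜 s f) (ha : a ∈ s) (hb : b ∈ s)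
    (hab : a < b) (hx : x ∈ Icc a b) :
    f x + (f a + f b - 2 * f ((a + b) / 2)) * tent a b x ≤ chord f a b x := by
  have hba : 0 < b - a := sub_pos.2 hab
  refine le_of_mul_le_mul_left ?_ hba
  rw [sub_mul_chord hab.ne, tent]
  convert hf.sub_mul_add_midpoint_gap_le ha hb hx using 1
  field_simp

end ConvexOn

end Scalar

section Operator

variable {B : Type*} [CStarAlgebra B]

theorem cfc_chord (f : ℝ → ℝ) (a b : ℝ) (X : B) (hX : IsSelfAdjoint X := by cfc_tac) :
    cfc (chord f a b) X = f a • 1 + slope f a b • (X - a • 1) := by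
  unfold chord
  rw [cfc_add .., cfc_const_mul .., cfc_sub .., cfc_id' .., cfc_const .., cfc_const ..,
    Algebra.algebraMap_eq_smul_one, Algebra.algebraMap_eq_smul_one]

@[fun_prop]
theorem continuous_chord (f : ℝ → ℝ) (a b : ℝ) : Continuous (chord f a b) := by
  unfold chord; fun_prop

@[fun_prop]
theorem continuous_tent (a b : ℝ) : Continuous (tent a b) := by
  unfold tent; fun_prop

variable [PartialOrder B] [StarOrderedRing B]

theorem spectrum_subset_Icc_of_smul_one_le {m M : ℝ} {X : B} (hmX : m • 1 ≤ X)
    (hXM : X ≤ M • 1) (hX : IsSelfAdjoint X := by cfc_tac) : spectrum ℝ X ⊆ Icc m M := by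
  rw [← Algebra.algebraMap_eq_smul_one] at hmX hXM
  exact fun x hx => ⟨(algebraMap_le_iff_le_spectrum hX).1 hmX x hx,
    (le_algebraMap_iff_spectrum_le hX).1 hXM x hx⟩

variable {s : Set ℝ} {f : ℝ → ℝ} {a b : ℝ} {X : B}

theorem ConvexOn.cfc_chord_le (hf : ConvexOn ℝ s f) (hcont : ContinuousOn f s) (ha : a ∈ s)
    (hb : b ∈ s) (hab : a < b) (hXs : spectrum ℝ X ⊆ s)
    (hout : ∀ x ∈ spectrum ℝ X, x ≤ a ∨ b ≤ x) : cfc (chord f a b) X ≤ cfc f X :=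
  cfc_mono (fun x hx => hf.chord_le_of_le_or_le ha hb (hXs hx) hab (hout x hx))
    (by fun_prop) (hcont.mono hXs)

theorem ConvexOn.cfc_add_midpoint_gap_smul_tent_le (hf : ConvexOn ℝ s f)
    (hcont : ContinuousOn f s) (hs : Icc a b ⊆ s) (hab : a < b) (hX : spectrum ℝ X ⊆ Icc a b) :
    cfc f X + (f a + f b - 2 * f ((a + b) / 2)) • cfc (tent a b) X ≤ cfc (chord f a b) X := by
  have ha : a ∈ s := hs ⟨le_rfl, hab.le⟩
  have hb : b ∈ s := hs ⟨hab.le, le_rfl⟩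
  have hfX : ContinuousOn f (spectrum ℝ X) := hcont.mono (hX.trans hs)
  rw [← cfc_smul .., ← cfc_add ..]
  exact cfc_mono (fun x hx => hf.add_midpoint_gap_mul_tent_le_chord ha hb hab (hX hx))

theorem cfc_tent_nonneg (hab : a < b) (hX : spectrum ℝ X ⊆ Icc a b) : 0 ≤ cfc (tent a b) X :=
  cfc_nonneg fun _ hx => tent_nonneg hab (hX hx)

end Operator

section PositiveMaps

variable {ι B₁ B₂ : Type*} [Fintype ι] [CStarAlgebra B₁] [CStarAlgebra B₂]
  {Φ : ι → B₁ →ₗ[ℂ] B₂}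

theorem sum_map_smul_one (hΦ1 : ∑ i, Φ i 1 = 1) (c : ℝ) : ∑ i, Φ i (c • (1 : B₁)) = c • 1 := by
  simp only [LinearMap.map_smul_of_tower, ← Finset.smul_sum, hΦ1]

theorem sum_map_const_add_smul_sub (hΦ1 : ∑ i, Φ i 1 = 1) (c r a : ℝ) (X : ι → B₁) :
    ∑ i, Φ i (c • 1 + r • (X i - a • 1)) = c • 1 + r • (∑ i, Φ i (X i) - a • 1) := by
  simp only [map_add, map_sub, Finset.sum_add_distrib, Finset.sum_sub_distrib,
    LinearMap.map_smul_of_tower (Φ _) r, ← Finset.smul_sum, sum_map_smul_one hΦ1]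

variable [PartialOrder B₁] [StarOrderedRing B₁] [PartialOrder B₂] [StarOrderedRing B₂]

theorem sum_map_le_sum_map (hΦ : ∀ i, ∀ T, 0 ≤ T → 0 ≤ Φ i T) {X Y : ι → B₁}
    (hXY : ∀ i, X i ≤ Y i) : ∑ i, Φ i (X i) ≤ ∑ i, Φ i (Y i) :=
  Finset.sum_le_sum fun i _ => sub_nonneg.1 <| by
    simpa only [map_sub] using hΦ i _ (sub_nonneg.2 (hXY i))

theorem ConvexOn.cfc_chord_sum_map_midpoint_le {s : Set ℝ} {f : ℝ → ℝ} (hf : ConvexOn ℝ s f)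
    (hcont : ContinuousOn f s) {a b : ℝ} (ha : a ∈ s) (hb : b ∈ s) (hab : a < b)
    (hΦ : ∀ i, ∀ T, 0 ≤ T → 0 ≤ Φ i T) (hΦ1 : ∑ i, Φ i 1 = 1) {A D : ι → B₁}
    (hAsa : ∀ i, IsSelfAdjoint (A i)) (hAspec : ∀ i, spectrum ℝ (A i) ⊆ s)
    (hDsa : ∀ i, IsSelfAdjoint (D i)) (hDspec : ∀ i, spectrum ℝ (D i) ⊆ s)
    (hA : ∀ i, A i ≤ a • 1) (hD : ∀ i, b • 1 ≤ D i)
    (hC : IsSelfAdjoint (∑ i, Φ i ((2 : ℝ)⁻¹ • (A i + D i)))) :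
    cfc (chord f a b) (∑ i, Φ i ((2 : ℝ)⁻¹ • (A i + D i))) ≤
      ∑ i, Φ i ((2 : ℝ)⁻¹ • (cfc f (A i) + cfc f (D i))) := by
  have hA_le i : cfc (chord f a b) (A i) ≤ cfc f (A i) := by
    rw [← Algebra.algebraMap_eq_smul_one] at hA
    exact hf.cfc_chord_le hcont ha hb hab (hAspec i)
      fun x hx => .inl <| (le_algebraMap_iff_spectrum_le (hAsa i)).1 (hA i) x hx
  have hD_le i : cfc (chord f a b) (D i) ≤ cfc f (D i) := by
    rw [← Algebra.algebraMap_eq_smul_one] at hD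
    exact hf.cfc_chord_le hcont ha hb hab (hDspec i)
      fun x hx => .inr <| (algebraMap_le_iff_le_spectrum (hDsa i)).1 (hD i) x hx
  calc cfc (chord f a b) (∑ i, Φ i ((2 : ℝ)⁻¹ • (A i + D i)))
      = f a • 1 + slope f a b • (∑ i, Φ i ((2 : ℝ)⁻¹ • (A i + D i)) - a • 1) := cfc_chord ..
    _ = ∑ i, Φ i (f a • 1 + slope f a b • ((2 : ℝ)⁻¹ • (A i + D i) - a • 1)) :=
      (sum_map_const_add_smul_sub hΦ1 ..).symm
    _ = ∑ i, Φ i ((2 : ℝ)⁻¹ • (cfc (chord f a b) (A i) + cfc (chord f a b) (D i))) := by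
      refine Finset.sum_congr rfl fun i _ => congrArg (Φ i) ?_
      rw [cfc_chord f a b (A i) (hAsa i), cfc_chord f a b (D i) (hDsa i)]
      module
    _ ≤ ∑ i, Φ i ((2 : ℝ)⁻¹ • (cfc f (A i) + cfc f (D i))) :=
      sum_map_le_sum_map hΦ fun i =>
        smul_le_smul_of_nonneg_left (add_le_add (hA_le i) (hD_le i)) (by norm_num)

end PositiveMaps

theorem half_smul_one_sub_smul_opAbs {H : Type*} [NormedAddCommGroup H] [InnerProductSpace ℂ H]
    [CompleteSpace H] (a b : ℝ) (C : H →L[ℂ] H) (hC : IsSelfAdjoint C) :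
    (1 / 2 : ℝ) • (1 : H →L[ℂ] H) - (b - a)⁻¹ • opAbs (C - ((a + b) / 2) • 1) =
      cfc (tent a b) C := by
  have hshift : C - ((a + b) / 2) • 1 = cfc (fun t : ℝ => t - (a + b) / 2) C := by
    rw [cfc_sub .., cfc_id' .., cfc_const .., Algebra.algebraMap_eq_smul_one]
  unfold tent
  rw [opAbs, hshift, ← cfc_comp' (fun t : ℝ => |t|) (fun t : ℝ => t - (a + b) / 2) C,
    cfc_sub .., cfc_const_mul .., cfc_const .., Algebra.algebraMap_eq_smul_one]

theorem jensen_refined_midpoint_general {H : Type*} [NormedAddCommGroup H] [InnerProductSpace ℂ H]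
    [CompleteSpace H] {n : ℕ} (m M : ℝ) (hmM : m < M) (J : Set ℝ)
    (hJmM : Set.Icc m M ⊆ J) (f : ℝ → ℝ) (hf : ContinuousOn f J) (hconv : ConvexOn ℝ J f)
    (Φ : Fin n → (H →L[ℂ] H) →ₗ[ℂ] (H →L[ℂ] H))
    (hΦpos : ∀ i, ∀ T : H →L[ℂ] H, 0 ≤ T → 0 ≤ Φ i T)
    (hΦ1 : ∑ i, Φ i 1 = (1 : H →L[ℂ] H))
    (A D : Fin n → H →L[ℂ] H)
    (hAsa : ∀ i, IsSelfAdjoint (A i)) (hAspec : ∀ i, spectrum ℝ (A i) ⊆ J)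
    (hDsa : ∀ i, IsSelfAdjoint (D i)) (hDspec : ∀ i, spectrum ℝ (D i) ⊆ J)
    (hA : ∀ i, A i ≤ m • 1) (hmid₁ : ∀ i, m • 1 ≤ (2 : ℝ)⁻¹ • (A i + D i))
    (hmid₂ : ∀ i, (2 : ℝ)⁻¹ • (A i + D i) ≤ M • 1) (hD : ∀ i, M • 1 ≤ D i) :
    cfc f (∑ i, Φ i ((2 : ℝ)⁻¹ • (A i + D i))) ≤
        ∑ i, Φ i ((2 : ℝ)⁻¹ • (cfc f (A i) + cfc f (D i))) -
          (f m + f M - 2 * f ((m + M) / 2)) •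
            ((1 / 2 : ℝ) • (1 : H →L[ℂ] H) -
              (M - m)⁻¹ •
                opAbs (∑ i, Φ i ((2 : ℝ)⁻¹ • (A i + D i)) - ((m + M) / 2) • 1)) ∧
      ∑ i, Φ i ((2 : ℝ)⁻¹ • (cfc f (A i) + cfc f (D i))) -
          (f m + f M - 2 * f ((m + M) / 2)) •
            ((1 / 2 : ℝ) • (1 : H →L[ℂ] H) -
              (M - m)⁻¹ •
                opAbs (∑ i, Φ i ((2 : ℝ)⁻¹ • (A i + D i)) - ((m + M) / 2) • 1)) ≤
        ∑ i, Φ i ((2 : ℝ)⁻¹ • (cfc f (A i) + cfc f (D i))) := by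
  have hm : m ∈ J := hJmM ⟨le_rfl, hmM.le⟩
  have hM : M ∈ J := hJmM ⟨hmM.le, le_rfl⟩
  set C := ∑ i, Φ i ((2 : ℝ)⁻¹ • (A i + D i))
  have hmC : m • 1 ≤ C := sum_map_smul_one hΦ1 m ▸ sum_map_le_sum_map hΦpos hmid₁
  have hCM : C ≤ M • 1 := sum_map_smul_one hΦ1 M ▸ sum_map_le_sum_map hΦpos hmid₂
  have hC : IsSelfAdjoint C := IsSelfAdjoint.of_ge hmC ((IsSelfAdjoint.all m).smul (.one _))
  have hCspec : spectrum ℝ C ⊆ Set.Icc m M := spectrum_subset_Icc_of_smul_one_le hmC hCM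
  rw [half_smul_one_sub_smul_opAbs m M C hC]
  have hgap := hconv.cfc_add_midpoint_gap_smul_tent_le hf hJmM hmM hCspec
  have hchord := hconv.cfc_chord_sum_map_midpoint_le hf hm hM hmM hΦpos hΦ1 hAsa hAspec hDsa
    hDspec hA hD hC
  have hδw := smul_nonneg (hconv.midpoint_gap_nonneg hm hM) (cfc_tent_nonneg hmM hCspec)
  exact ⟨le_sub_iff_add_le.2 (hgap.trans hchord), sub_le_self _ hδw⟩

/-- Corollary 3.3 of the paper. -/
theorem jensen_refined_midpoint {H : Type*} [NormedAddCommGroup H] [InnerProductSpace ℂ H]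
    [CompleteSpace H] {n : ℕ} (m M : ℝ) (hmM : m < M) (J : Set ℝ) (hJ : J.OrdConnected)
    (hJmM : Set.Icc m M ⊆ J) (f : ℝ → ℝ) (hf : ContinuousOn f J) (hconv : ConvexOn ℝ J f)
    (Φ : Fin n → (H →L[ℂ] H) →ₗ[ℂ] (H →L[ℂ] H))
    (hΦpos : ∀ i, ∀ T : H →L[ℂ] H, 0 ≤ T → 0 ≤ Φ i T)
    (hΦ1 : ∑ i, Φ i 1 = (1 : H →L[ℂ] H))
    (A D : Fin n → H →L[ℂ] H)
    (hAsa : ∀ i, IsSelfAdjoint (A i)) (hAspec : ∀ i, spectrum ℝ (A i) ⊆ J)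
    (hDsa : ∀ i, IsSelfAdjoint (D i)) (hDspec : ∀ i, spectrum ℝ (D i) ⊆ J)
    (hA : ∀ i, A i ≤ m • 1) (hmid₁ : ∀ i, m • 1 ≤ (2 : ℝ)⁻¹ • (A i + D i))
    (hmid₂ : ∀ i, (2 : ℝ)⁻¹ • (A i + D i) ≤ M • 1) (hD : ∀ i, M • 1 ≤ D i) :
    cfc f (∑ i, Φ i ((2 : ℝ)⁻¹ • (A i + D i))) ≤
        ∑ i, Φ i ((2 : ℝ)⁻¹ • (cfc f (A i) + cfc f (D i))) -
          (f m + f M - 2 * f ((m + M) / 2)) •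
            ((1 / 2 : ℝ) • (1 : H →L[ℂ] H) -
              (M - m)⁻¹ •
                opAbs (∑ i, Φ i ((2 : ℝ)⁻¹ • (A i + D i)) - ((m + M) / 2) • 1)) ∧
      ∑ i, Φ i ((2 : ℝ)⁻¹ • (cfc f (A i) + cfc f (D i))) -
          (f m + f M - 2 * f ((m + M) / 2)) •
            ((1 / 2 : ℝ) • (1 : H →L[ℂ] H) -
              (M - m)⁻¹ •
                opAbs (∑ i, Φ i ((2 : ℝ)⁻¹ • (A i + D i)) - ((m + M) / 2) • 1)) ≤
        ∑ i, Φ i ((2 : ℝ)⁻¹ • (cfc f (A i) + cfc f (D i))) :=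
  jensen_refined_midpoint_general m M hmM J hJmM f hf hconv Φ hΦpos hΦ1 A D hAsa hAspec hDsa hDspec
    hA hmid₁ hmid₂ hD
end

section
/- Let m < M be real numbers, let J be an interval containing [m, M], and let f : J → ℝ be a continuous convex function. Let Φ_1,…,Φ_n be positive linear maps on B(H) with Σ_{i=1}^n Φ_i(I) = I, and let A_i, D_i ∈ σ(J) (i = 1,…,n) satisfy A_i ≤ m·I ≤ (A_i + D_i)/2 ≤ M·I ≤ D_i for each i. Then Σ_i Φ_i(f((A_i + D_i)/2)) ≤ (1/2)·[ f(Σ_i Φ_i(A_i)) + f(Σ_i Φ_i(D_i)) ] − δ_f · X̃ ≤ (1/2)·[ f(Σ_i Φ_i(A_i)) + f(Σ_i Φ_i(D_i)) ], where X̃ = (1/2)·I − (1/(M−m))·Σ_i Φ_i(|(A_i + D_i)/2 − ((m+M)/2)·I|). -/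
/-!
Let `ℓ` be the chord of `f` over `[m, M]`. Convexity puts `f` below the broken line through
`(m, f m)`, `(μ, f μ)`, `(M, f M)`, `μ = (m + M) / 2`, which is `ℓ` minus `δ_f` times the tent
`1/2 - |x - μ| / (M - m)`; and it puts `f` above `ℓ` outside `(m, M)`. Applying the first bound to
`(Aᵢ + Dᵢ) / 2`, whose spectrum lies in `[m, M]`, and summing against the `Φᵢ` gives
`ℓ(½ ∑ Φᵢ(Aᵢ) + ½ ∑ Φᵢ(Dᵢ)) - δ_f X̃`. Since `∑ Φᵢ(Aᵢ) ≤ m` and `∑ Φᵢ(Dᵢ) ≥ M` while their spectra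
stay in `J`, the second bound gives `ℓ(∑ Φᵢ(Aᵢ)) ≤ f(∑ Φᵢ(Aᵢ))` and likewise for the `Dᵢ`.
Finally `X̃ ≥ 0` because `|(Aᵢ + Dᵢ)/2 - μ| ≤ (M - m)/2`, and `δ_f ≥ 0` by midpoint convexity.
-/

open Set

namespace ConvexOn

variable {J : Set ℝ} {f : ℝ → ℝ}

lemma mul_le_secant (hf : ConvexOn ℝ J f) {x y z : ℝ} (hx : x ∈ J) (hz : z ∈ J)
    (hxy : x ≤ y) (hyz : y ≤ z) : (z - x) * f y ≤ (z - y) * f x + (y - x) * f z := by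
  rcases hxy.eq_or_lt with rfl | hxy
  · simp
  rcases hyz.eq_or_lt with rfl | hyz
  · simp
  exact hf.secant_mono_aux1 hx hz hxy hyz

lemma two_mul_midpoint_le (hf : ConvexOn ℝ J f) {m M : ℝ} (hm : m ∈ J) (hM : M ∈ J) :
    2 * f ((m + M) / 2) ≤ f m + f M := by
  have h := hf.2 hm hM (by norm_num : (0 : ℝ) ≤ 1 / 2) (by norm_num : (0 : ℝ) ≤ 1 / 2)
    (by norm_num)
  simp only [smul_eq_mul] at h
  rw [show 1 / 2 * m + 1 / 2 * M = (m + M) / 2 by ring] at h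
  linarith

variable {m M α β : ℝ}

lemma affine_le_of_notMem_Ioo (hf : ConvexOn ℝ J f) (hmM : m < M) (hm : m ∈ J) (hM : M ∈ J)
    (hαm : α * m + β = f m) (hαM : α * M + β = f M) {x : ℝ} (hx : x ∈ J)
    (hxmM : x ≤ m ∨ M ≤ x) : α * x + β ≤ f x := by
  refine le_of_mul_le_mul_left ?_ (sub_pos.2 hmM)
  rcases hxmM with hxm | hMx
  · linear_combination hf.mul_le_secant hx hM hxm hmM.le + (M - x) * hαm - (m - x) * hαM
  · linear_combination hf.mul_le_secant hm hx hmM.le hMx - (x - M) * hαm + (x - m) * hαM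

lemma le_affine_sub_tent (hf : ConvexOn ℝ (Icc m M) f) (hmM : m < M)
    (hαm : α * m + β = f m) (hαM : α * M + β = f M) {x : ℝ} (hx : x ∈ Icc m M) :
    f x ≤ α * x + β -
      (f m + f M - 2 * f ((m + M) / 2)) * (1 / 2 - (M - m)⁻¹ * |x - (m + M) / 2|) := by
  have hm : m ∈ Icc m M := left_mem_Icc.2 hmM.le
  have hM : M ∈ Icc m M := right_mem_Icc.2 hmM.le
  have hμ : (m + M) / 2 ∈ Icc m M := ⟨by linarith, by linarith⟩
  have hMm : 0 < M - m := by linarith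
  rcases le_total x ((m + M) / 2) with hxμ | hμx
  · have key := hf.mul_le_secant hm hμ hx.1 hxμ
    rw [abs_of_nonpos (by linarith)]
    field_simp
    linear_combination 4 * key - 2 * (M - x) * hαm - 2 * (x - m) * hαM
  · have key := hf.mul_le_secant hμ hM hμx hx.2
    rw [abs_of_nonneg (by linarith)]
    field_simp
    linear_combination 4 * key - 2 * (M - x) * hαm - 2 * (x - m) * hαM

end ConvexOn

section CFC

variable {A : Type*} [CStarAlgebra A]

lemma cfc_affine (α β : ℝ) (a : A) (ha : IsSelfAdjoint a := by cfc_tac) :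
    cfc (fun x : ℝ => α * x + β) a = α • a + β • 1 := by
  rw [cfc_add .., cfc_const_mul_id .., cfc_const .., Algebra.algebraMap_eq_smul_one]

lemma cfc_abs_sub (μ : ℝ) (a : A) (ha : IsSelfAdjoint a := by cfc_tac) :
    cfc (fun x : ℝ => |x - μ|) a = cfc (fun x : ℝ => |x|) (a - μ • 1) := by
  rw [cfc_comp' (fun x : ℝ => |x|) (fun x => x - μ) a, cfc_sub .., cfc_id' .., cfc_const ..,
    Algebra.algebraMap_eq_smul_one]

variable [PartialOrder A] [StarOrderedRing A]

lemma spectrum_subset_Icc_iff {a : A} (ha : IsSelfAdjoint a) {r s : ℝ} :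
    spectrum ℝ a ⊆ Icc r s ↔ r • 1 ≤ a ∧ a ≤ s • 1 := by
  simp_rw [← Algebra.algebraMap_eq_smul_one, algebraMap_le_iff_le_spectrum ha,
    le_algebraMap_iff_spectrum_le ha, subset_def, mem_Icc, forall_and]

lemma cfc_abs_sub_midpoint_le {m M : ℝ} {a : A} (ha : IsSelfAdjoint a)
    (haS : spectrum ℝ a ⊆ Icc m M) :
    cfc (fun x : ℝ => |x|) (a - ((m + M) / 2) • 1) ≤ ((M - m) / 2) • 1 := by
  rw [← cfc_abs_sub _ a, ← Algebra.algebraMap_eq_smul_one, cfc_le_algebraMap_iff _ _ a]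
  intro x hx
  obtain ⟨hmx, hxM⟩ := haS hx
  rw [abs_le]
  constructor <;> linarith

variable {J : Set ℝ} {f : ℝ → ℝ} {m M α β : ℝ}

lemma affine_le_cfc (hf : ConvexOn ℝ J f) (hfc : ContinuousOn f J) (hmM : m < M) (hm : m ∈ J)
    (hM : M ∈ J) (hαm : α * m + β = f m) (hαM : α * M + β = f M) {a : A}
    (ha : IsSelfAdjoint a) (haJ : spectrum ℝ a ⊆ J) (hout : a ≤ m • 1 ∨ M • 1 ≤ a) :
    α • a + β • 1 ≤ cfc f a := by
  rw [← cfc_affine α β a, cfc_le_iff _ f a (by fun_prop) (hfc.mono haJ)]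
  intro x hx
  refine hf.affine_le_of_notMem_Ioo hmM hm hM hαm hαM (haJ hx) ?_
  rw [← Algebra.algebraMap_eq_smul_one, ← Algebra.algebraMap_eq_smul_one,
    le_algebraMap_iff_spectrum_le ha, algebraMap_le_iff_le_spectrum ha] at hout
  exact hout.imp (· x hx) (· x hx)

lemma cfc_le_affine_sub_tent (hf : ConvexOn ℝ (Icc m M) f) (hfc : ContinuousOn f (Icc m M))
    (hmM : m < M) (hαm : α * m + β = f m) (hαM : α * M + β = f M) {a : A}
    (ha : IsSelfAdjoint a) (haS : spectrum ℝ a ⊆ Icc m M) :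
    cfc f a ≤ α • a + β • 1 - (f m + f M - 2 * f ((m + M) / 2)) •
      ((1 / 2 : ℝ) • 1 - (M - m)⁻¹ • cfc (fun x : ℝ => |x|) (a - ((m + M) / 2) • 1)) := by
  have hbound := cfc_le_iff f (fun x => α * x + β - (f m + f M - 2 * f ((m + M) / 2)) *
    (1 / 2 - (M - m)⁻¹ * |x - (m + M) / 2|)) a (hfc.mono haS) (by fun_prop) ha
  rw [cfc_sub (fun x => α * x + β) _ a, cfc_affine α β a, cfc_const_mul _ _ a,
    cfc_sub (fun _ => (1 / 2 : ℝ)) _ a, cfc_const _ a, cfc_const_mul _ _ a, cfc_abs_sub _ a,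
    Algebra.algebraMap_eq_smul_one] at hbound
  exact hbound.2 fun x hx => hf.le_affine_sub_tent hmM hαm hαM (haS hx)

end CFC

namespace PositiveLinearMap

variable {A B : Type*} [CStarAlgebra A] [PartialOrder A] [CStarAlgebra B] [PartialOrder B]
  {ι : Type*} [Fintype ι] (Φ : ι → A →ₚ[ℂ] B)

lemma sum_map_smul_one (hΦ : ∑ i, Φ i 1 = 1) (r : ℝ) : ∑ i, Φ i (r • 1) = r • (1 : B) := by
  simp_rw [map_smul_of_tower, ← Finset.smul_sum, hΦ]

variable [StarOrderedRing B]

lemma smul_one_le_sum_map (hΦ : ∑ i, Φ i 1 = 1) {r : ℝ} {T : ι → A} (hT : ∀ i, r • 1 ≤ T i) :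
    r • 1 ≤ ∑ i, Φ i (T i) := by
  rw [← sum_map_smul_one Φ hΦ]
  gcongr with i
  exact hT i

lemma sum_map_le_smul_one (hΦ : ∑ i, Φ i 1 = 1) {s : ℝ} {T : ι → A} (hT : ∀ i, T i ≤ s • 1) :
    ∑ i, Φ i (T i) ≤ s • 1 := by
  rw [← sum_map_smul_one Φ hΦ]
  gcongr with i
  exact hT i

variable [StarOrderedRing A]

lemma isSelfAdjoint_sum_map {T : ι → A} (hT : ∀ i, IsSelfAdjoint (T i)) :
    IsSelfAdjoint (∑ i, Φ i (T i)) :=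
  isSelfAdjoint_sum Finset.univ fun i _ => (hT i).map' (Φ i)

lemma spectrum_sum_map_subset (hΦ : ∑ i, Φ i 1 = 1) {J : Set ℝ} (hJ : J.OrdConnected) {T : ι → A}
    (hT : ∀ i, IsSelfAdjoint (T i)) (hTJ : ∀ i, spectrum ℝ (T i) ⊆ J) :
    spectrum ℝ (∑ i, Φ i (T i)) ⊆ J := by
  set S := ⋃ i, spectrum ℝ (T i)
  have hS : IsCompact S := isCompact_iUnion fun i => spectrum.isCompact (T i)
  have hsum := isSelfAdjoint_sum_map Φ hT
  have hbounds {r s : ℝ} (h : S ⊆ Icc r s) : spectrum ℝ (∑ i, Φ i (T i)) ⊆ Icc r s := by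
    have hTi i := (spectrum_subset_Icc_iff (hT i)).1 ((subset_iUnion _ i).trans h)
    exact (spectrum_subset_Icc_iff hsum).2
      ⟨smul_one_le_sum_map Φ hΦ fun i => (hTi i).1, sum_map_le_smul_one Φ hΦ fun i => (hTi i).2⟩
  intro x hx
  rcases S.eq_empty_or_nonempty with hS0 | hS0
  · -- with no spectrum at all, every interval bounds the `T i`, even an empty one
    have := hbounds (r := x + 1) (s := x) (by simp [hS0]) hx
    exact absurd this.1 (by linarith)
  · obtain ⟨i, hi⟩ := mem_iUnion.1 (hS.sInf_mem hS0)
    obtain ⟨j, hj⟩ := mem_iUnion.1 (hS.sSup_mem hS0)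
    exact hJ.out (hTJ i hi) (hTJ j hj)
      (hbounds (fun y hy => ⟨csInf_le hS.bddBelow hy, le_csSup hS.bddAbove hy⟩) hx)

lemma half_sub_sum_map_abs_nonneg (hΦ : ∑ i, Φ i 1 = 1) {m M : ℝ} (hmM : m < M) {c : ι → A}
    (hc : ∀ i, IsSelfAdjoint (c i)) (hcm : ∀ i, m • 1 ≤ c i) (hcM : ∀ i, c i ≤ M • 1) :
    0 ≤ (1 / 2 : ℝ) • (1 : B) -
      (M - m)⁻¹ • ∑ i, Φ i (cfc (fun x : ℝ => |x|) (c i - ((m + M) / 2) • 1)) := by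
  have hsum := sum_map_le_smul_one Φ hΦ fun i =>
    cfc_abs_sub_midpoint_le (hc i) ((spectrum_subset_Icc_iff (hc i)).2 ⟨hcm i, hcM i⟩)
  have hMm : 0 < M - m := sub_pos.2 hmM
  rw [sub_nonneg]
  calc (M - m)⁻¹ • ∑ i, Φ i (cfc (fun x : ℝ => |x|) (c i - ((m + M) / 2) • 1))
      ≤ (M - m)⁻¹ • ((M - m) / 2) • (1 : B) := by gcongr
    _ = (1 / 2 : ℝ) • 1 := by rw [smul_smul]; field_simp

variable {J : Set ℝ} {f : ℝ → ℝ} {m M : ℝ}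

theorem sum_map_cfc_midpoint_le (hΦ : ∑ i, Φ i 1 = 1) (hJ : J.OrdConnected)
    (hJmM : Icc m M ⊆ J) (hf : ContinuousOn f J) (hconv : ConvexOn ℝ J f) (hmM : m < M)
    {a d : ι → A} (ha : ∀ i, IsSelfAdjoint (a i)) (haJ : ∀ i, spectrum ℝ (a i) ⊆ J)
    (hd : ∀ i, IsSelfAdjoint (d i)) (hdJ : ∀ i, spectrum ℝ (d i) ⊆ J)
    (ham : ∀ i, a i ≤ m • 1) (hmid₁ : ∀ i, m • 1 ≤ (2 : ℝ)⁻¹ • (a i + d i))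
    (hmid₂ : ∀ i, (2 : ℝ)⁻¹ • (a i + d i) ≤ M • 1) (hdM : ∀ i, M • 1 ≤ d i) :
    ∑ i, Φ i (cfc f ((2 : ℝ)⁻¹ • (a i + d i))) ≤
      (2 : ℝ)⁻¹ • (cfc f (∑ i, Φ i (a i)) + cfc f (∑ i, Φ i (d i))) -
        (f m + f M - 2 * f ((m + M) / 2)) • ((1 / 2 : ℝ) • (1 : B) - (M - m)⁻¹ •
          ∑ i, Φ i (cfc (fun x : ℝ => |x|) ((2 : ℝ)⁻¹ • (a i + d i) - ((m + M) / 2) • 1))) := by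
  obtain ⟨α, β, hαm, hαM⟩ : ∃ α β : ℝ, α * m + β = f m ∧ α * M + β = f M :=
    ⟨(f M - f m) / (M - m), f m - (f M - f m) / (M - m) * m, by ring,
      by field_simp [(sub_pos.2 hmM).ne']; ring⟩
  have hm : m ∈ J := hJmM (left_mem_Icc.2 hmM.le)
  have hM : M ∈ J := hJmM (right_mem_Icc.2 hmM.le)
  have hc i : IsSelfAdjoint ((2 : ℝ)⁻¹ • (a i + d i)) :=
    (IsSelfAdjoint.all _).smul ((ha i).add (hd i))
  have hP : α • ∑ i, Φ i (a i) + β • 1 ≤ cfc f (∑ i, Φ i (a i)) :=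
    affine_le_cfc hconv hf hmM hm hM hαm hαM (isSelfAdjoint_sum_map Φ ha)
      (spectrum_sum_map_subset Φ hΦ hJ ha haJ) (.inl (sum_map_le_smul_one Φ hΦ ham))
  have hQ : α • ∑ i, Φ i (d i) + β • 1 ≤ cfc f (∑ i, Φ i (d i)) :=
    affine_le_cfc hconv hf hmM hm hM hαm hαM (isSelfAdjoint_sum_map Φ hd)
      (spectrum_sum_map_subset Φ hΦ hJ hd hdJ) (.inr (smul_one_le_sum_map Φ hΦ hdM))
  calc ∑ i, Φ i (cfc f ((2 : ℝ)⁻¹ • (a i + d i)))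
      ≤ ∑ i, Φ i (α • ((2 : ℝ)⁻¹ • (a i + d i)) + β • 1 - (f m + f M - 2 * f ((m + M) / 2)) •
          ((1 / 2 : ℝ) • 1 - (M - m)⁻¹ •
            cfc (fun x : ℝ => |x|) ((2 : ℝ)⁻¹ • (a i + d i) - ((m + M) / 2) • 1))) := by
        gcongr with i
        exact cfc_le_affine_sub_tent (hconv.subset hJmM (convex_Icc m M)) (hf.mono hJmM) hmM
          hαm hαM (hc i) ((spectrum_subset_Icc_iff (hc i)).2 ⟨hmid₁ i, hmid₂ i⟩)
    _ = (2 : ℝ)⁻¹ • ((α • ∑ i, Φ i (a i) + β • 1) + (α • ∑ i, Φ i (d i) + β • 1)) -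
        (f m + f M - 2 * f ((m + M) / 2)) • ((1 / 2 : ℝ) • (1 : B) - (M - m)⁻¹ •
          ∑ i, Φ i (cfc (fun x : ℝ => |x|) ((2 : ℝ)⁻¹ • (a i + d i) - ((m + M) / 2) • 1))) := by
        simp only [map_sub, map_add, map_smul_of_tower, Finset.sum_sub_distrib,
          Finset.sum_add_distrib, ← Finset.smul_sum, hΦ]
        module
    _ ≤ _ := by gcongr

end PositiveLinearMap

/-- converse Jensen-type inequality (3.3) of the paper. -/
theorem jensen_converse_refined {H : Type*} [NormedAddCommGroup H] [InnerProductSpace ℂ H]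
    [CompleteSpace H] {n : ℕ} (m M : ℝ) (hmM : m < M) (J : Set ℝ) (hJ : J.OrdConnected)
    (hJmM : Set.Icc m M ⊆ J) (f : ℝ → ℝ) (hf : ContinuousOn f J) (hconv : ConvexOn ℝ J f)
    (Φ : Fin n → (H →L[ℂ] H) →ₗ[ℂ] (H →L[ℂ] H))
    (hΦpos : ∀ i, ∀ T : H →L[ℂ] H, 0 ≤ T → 0 ≤ Φ i T)
    (hΦ1 : ∑ i, Φ i 1 = (1 : H →L[ℂ] H))
    (A D : Fin n → H →L[ℂ] H)
    (hAsa : ∀ i, IsSelfAdjoint (A i)) (hAspec : ∀ i, spectrum ℝ (A i) ⊆ J)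
    (hDsa : ∀ i, IsSelfAdjoint (D i)) (hDspec : ∀ i, spectrum ℝ (D i) ⊆ J)
    (hA : ∀ i, A i ≤ m • 1) (hmid₁ : ∀ i, m • 1 ≤ (2 : ℝ)⁻¹ • (A i + D i))
    (hmid₂ : ∀ i, (2 : ℝ)⁻¹ • (A i + D i) ≤ M • 1) (hD : ∀ i, M • 1 ≤ D i) :
    ∑ i, Φ i (cfc f ((2 : ℝ)⁻¹ • (A i + D i))) ≤
        (2 : ℝ)⁻¹ • (cfc f (∑ i, Φ i (A i)) + cfc f (∑ i, Φ i (D i))) -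
          (f m + f M - 2 * f ((m + M) / 2)) •
            ((1 / 2 : ℝ) • (1 : H →L[ℂ] H) -
              (M - m)⁻¹ •
                ∑ i, Φ i (opAbs ((2 : ℝ)⁻¹ • (A i + D i) - ((m + M) / 2) • 1))) ∧
      (2 : ℝ)⁻¹ • (cfc f (∑ i, Φ i (A i)) + cfc f (∑ i, Φ i (D i))) -
          (f m + f M - 2 * f ((m + M) / 2)) •
            ((1 / 2 : ℝ) • (1 : H →L[ℂ] H) -
              (M - m)⁻¹ •
                ∑ i, Φ i (opAbs ((2 : ℝ)⁻¹ • (A i + D i) - ((m + M) / 2) • 1))) ≤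
        (2 : ℝ)⁻¹ • (cfc f (∑ i, Φ i (A i)) + cfc f (∑ i, Φ i (D i))) := by
  let Ψ i : (H →L[ℂ] H) →ₚ[ℂ] (H →L[ℂ] H) := .mk₀ (Φ i) (hΦpos i)
  have hc i : IsSelfAdjoint ((2 : ℝ)⁻¹ • (A i + D i)) :=
    (IsSelfAdjoint.all _).smul ((hAsa i).add (hDsa i))
  have hδ : 0 ≤ f m + f M - 2 * f ((m + M) / 2) := sub_nonneg.2 <|
    hconv.two_mul_midpoint_le (hJmM (left_mem_Icc.2 hmM.le)) (hJmM (right_mem_Icc.2 hmM.le))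
  exact ⟨PositiveLinearMap.sum_map_cfc_midpoint_le Ψ hΦ1 hJ hJmM hf hconv hmM hAsa hAspec hDsa
      hDspec hA hmid₁ hmid₂ hD,
    sub_le_self _ <| smul_nonneg hδ <|
      PositiveLinearMap.half_sub_sum_map_abs_nonneg Ψ hΦ1 hmM hc hmid₁ hmid₂⟩
end
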